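/- Let p : ℝ^n → ℝ^n be an orthogonal projection (a self-adjoint idempotent linear map) such that p(ℤ^n) ⊆ ℤ^n. Then the image of p is spanned by a subset of the standard basis vectors: there exists a set I ⊆ {1,…,n} such that range(p) = span{e_i : i ∈ I}, where (e_i) is the canonical basis of ℝ^n. Equivalently, for each i, p(e_i) ∈ {0, ±e₁, …, ±e_n}. -/

import Mathlib

noncomputable section

open Finset Module

/-- A vector of `ℝⁿ` with integer coordinates. -/
def IsIntVec {n : ℕ} (v : EuclideanSpace ℝ (Fin n)) : Prop :=
  ∀ i, ∃ z : ℤ, v i = (z : ℝ)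

/-- A rational subspace of `ℝⁿ`: one spanned by vectors with rational coordinates. -/
def IsRationalSubspace {n : ℕ} (B : Submodule ℝ (EuclideanSpace ℝ (Fin n))) : Prop :=
  ∃ s : Set (EuclideanSpace ℝ (Fin n)),
    (∀ v ∈ s, ∀ i, ∃ q : ℚ, v i = (q : ℝ)) ∧ Submodule.span ℝ s = B

/-- `A` is `(e,j)`-irrational: every rational subspace `B` of dimension `e` satisfies
`dim (A ⊓ B) < j + g(dim A, e, n)` where `g(d,e,n) = max 0 (d+e-n)`. -/
def IsIrrational {n : ℕ} (A : Submodule ℝ (EuclideanSpace ℝ (Fin n))) (e j : ℕ) : Prop :=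
  ∀ B : Submodule ℝ (EuclideanSpace ℝ (Fin n)),
    IsRationalSubspace B → finrank ℝ B = e →
      finrank ℝ ↥(A ⊓ B) < j + (finrank ℝ A + e - n)

/-- The angle `ω(X,Y) = ‖X∧Y‖ / (‖X‖·‖Y‖)`. -/
def omegaAngle {n : ℕ} (X Y : EuclideanSpace ℝ (Fin n)) : ℝ :=
  Real.sqrt (‖X‖ ^ 2 * ‖Y‖ ^ 2 - (inner ℝ X Y : ℝ) ^ 2) / (‖X‖ * ‖Y‖)

/-- First angle `ψ₁(A,B)` between two subspaces. -/
def psiOne {n : ℕ} (A B : Submodule ℝ (EuclideanSpace ℝ (Fin n))) : ℝ :=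
  sInf {t | ∃ X ∈ A, X ≠ 0 ∧ ∃ Y ∈ B, Y ≠ 0 ∧ t = omegaAngle X Y}

/-- `‖X₁ ∧ ⋯ ∧ X_e‖`, as the square root of the Gram determinant. -/
def gramNorm {n e : ℕ} (X : Fin e → EuclideanSpace ℝ (Fin n)) : ℝ :=
  Real.sqrt (Matrix.of fun i j : Fin e => (inner ℝ (X i) (X j) : ℝ)).det

/-- `X` is a `ℤ`-basis of the lattice `B ∩ ℤⁿ`. -/
def IsZBasis {n e : ℕ} (X : Fin e → EuclideanSpace ℝ (Fin n))
    (B : Submodule ℝ (EuclideanSpace ℝ (Fin n))) : Prop :=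
  (∀ i, X i ∈ B) ∧ (∀ i, IsIntVec (X i)) ∧ LinearIndependent ℝ X ∧
    ∀ v ∈ B, IsIntVec v → ∃ c : Fin e → ℤ, v = ∑ i, (c i : ℝ) • X i

/-- The height `H(B)` of a rational subspace: the common value of `‖X₁ ∧ ⋯ ∧ X_e‖`
over `ℤ`-bases of the lattice `B ∩ ℤⁿ`. -/
def height {n : ℕ} (B : Submodule ℝ (EuclideanSpace ℝ (Fin n))) : ℝ :=
  sSup {h | ∃ e : ℕ, ∃ X : Fin e → EuclideanSpace ℝ (Fin n), IsZBasis X B ∧ h = gramNorm X}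

/-- The Diophantine exponent `μ_n(A|e)₁ ∈ ℝ ∪ {+∞}`. -/
def diophExp {n : ℕ} (A : Submodule ℝ (EuclideanSpace ℝ (Fin n))) (e : ℕ) : EReal :=
  sSup {x : EReal | ∃ μ : ℝ, x = (μ : ℝ) ∧ 0 < μ ∧
    {B : Submodule ℝ (EuclideanSpace ℝ (Fin n)) |
      IsRationalSubspace B ∧ finrank ℝ B = e ∧ psiOne A B ≤ height B ^ (-μ)}.Infinite}

/-!
An orthogonal projection `p` is self-adjoint, so `p(eᵢ)ᵢ = ⟪eᵢ, p eᵢ⟫ = ‖p eᵢ‖² = ∑ₖ p(eᵢ)ₖ²`.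
If `p(eᵢ)` has integer coordinates `z`, then `zᵢ - zᵢ² = ∑_{k ≠ i} zₖ² ≥ 0` forces `zᵢ ∈ {0, 1}`
and then `zₖ = 0` for `k ≠ i`. Hence `p` fixes or kills each `eᵢ`, and its range is spanned by
the `eᵢ` it fixes.
-/

theorem Int.eq_zero_or_eq_single_of_apply_eq_sum_sq {ι : Type*} [Fintype ι] [DecidableEq ι]
    {z : ι → ℤ} {i : ι} (h : z i = ∑ k, z k ^ 2) : z = 0 ∨ z = Pi.single i 1 := by
  have hsplit : z i - z i ^ 2 = ∑ k ∈ univ.erase i, z k ^ 2 := by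
    have := (add_sum_erase univ (fun k => z k ^ 2) (mem_univ i)).symm
    linarith
  have hrest_nonneg : 0 ≤ ∑ k ∈ univ.erase i, z k ^ 2 := sum_nonneg fun k _ => sq_nonneg _
  have hzi : z i = 0 ∨ z i = 1 := by
    have : 0 ≤ z i := by nlinarith
    have : z i ≤ 1 := by nlinarith
    omega
  have hrest : ∀ k ≠ i, z k = 0 := by
    intro k hk
    have hsum : ∑ k ∈ univ.erase i, z k ^ 2 = 0 := by
      rcases hzi with h | h <;> rw [h] at hsplit <;> linarith
    exact pow_eq_zero_iff two_ne_zero |>.mp <| (sum_eq_zero_iff_of_nonneg fun k _ =>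
      sq_nonneg (z k)).mp hsum k (mem_erase.mpr ⟨hk, mem_univ k⟩)
  have hz : z = Pi.single i (z i) := by
    ext k
    by_cases hk : k = i
    · simp [hk]
    · simp [hk, hrest k hk]
  rcases hzi with h0 | h1
  · exact .inl (by rw [hz, h0, Pi.single_zero])
  · exact .inr (by rw [hz, h1])

section InnerProductSpace

variable {𝕜 E : Type*} [RCLike 𝕜] [NormedAddCommGroup E] [InnerProductSpace 𝕜 E]

theorem LinearMap.isSymmetricProjection_of_isOrtho_ker_range {p : E →ₗ[𝕜] E}
    (hidem : p ∘ₗ p = p)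
    (horth : ∀ x ∈ LinearMap.ker p, ∀ y ∈ LinearMap.range p, (inner 𝕜 x y : 𝕜) = 0) :
    p.IsSymmetricProjection := by
  have hp : IsIdempotentElem p := hidem
  exact ⟨hp, (LinearMap.IsIdempotentElem.isSymmetric_iff_isOrtho_range_ker hp).mpr
    (Submodule.isOrtho_iff_inner_eq.mpr horth).symm⟩

theorem LinearMap.IsSymmetricProjection.inner_apply_self {p : E →ₗ[𝕜] E}
    (hp : p.IsSymmetricProjection) (x : E) : inner 𝕜 x (p x) = inner 𝕜 (p x) (p x) := by
  rw [hp.isSymmetric, ← Module.End.mul_apply, hp.isIdempotentElem.eq]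

end InnerProductSpace

theorem Module.Basis.range_eq_span_of_forall_apply_eq_zero_or_self {R M ι : Type*} [Semiring R]
    [AddCommMonoid M] [Module R M] (b : Basis ι R M) {f : M →ₗ[R] M}
    (hf : ∀ i, f (b i) = 0 ∨ f (b i) = b i) :
    LinearMap.range f = Submodule.span R (b '' {i | f (b i) = b i}) := by
  refine le_antisymm ?_ (Submodule.span_le.mpr ?_)
  · rw [LinearMap.range_eq_map, ← b.span_eq, Submodule.map_span, Submodule.span_le]
    rintro _ ⟨_, ⟨i, rfl⟩, rfl⟩
    rcases hf i with h0 | h1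
    · simp [h0]
    · rw [h1]; exact Submodule.subset_span ⟨i, h1, rfl⟩
  · rintro _ ⟨i, hi, rfl⟩
    exact ⟨b i, hi⟩

theorem LinearMap.IsSymmetricProjection.apply_single_self_eq_sum_sq {ι : Type*} [Fintype ι]
    [DecidableEq ι] {p : EuclideanSpace ℝ ι →ₗ[ℝ] EuclideanSpace ℝ ι}
    (hp : p.IsSymmetricProjection) (i : ι) :
    p (EuclideanSpace.single i 1) i = ∑ k, p (EuclideanSpace.single i 1) k ^ 2 := by
  have h := hp.inner_apply_self (EuclideanSpace.single i 1)
  rw [EuclideanSpace.inner_single_left, PiLp.inner_apply] at h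
  simpa [sq] using h

theorem isIntVec_single {n : ℕ} (i : Fin n) : IsIntVec (EuclideanSpace.single i (1 : ℝ)) := by
  intro k
  refine ⟨if k = i then 1 else 0, ?_⟩
  by_cases hk : k = i <;> simp [hk]

theorem IsIntVec.eq_zero_or_eq_single {n : ℕ} {v : EuclideanSpace ℝ (Fin n)} (hv : IsIntVec v)
    {i : Fin n} (h : v i = ∑ k, v k ^ 2) : v = 0 ∨ v = EuclideanSpace.single i 1 := by
  choose z hz using hv
  have hzi : z i = ∑ k, z k ^ 2 := by
    simp only [hz] at h
    exact_mod_cast h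
  rcases Int.eq_zero_or_eq_single_of_apply_eq_sum_sq hzi with h0 | h1
  · left; ext k; simp [hz, h0]
  · right; ext k; by_cases hk : k = i <;> simp [hz, h1, hk]

theorem statement8 (n : ℕ)
    (p : EuclideanSpace ℝ (Fin n) →ₗ[ℝ] EuclideanSpace ℝ (Fin n))
    (hidem : p ∘ₗ p = p)
    (horth : ∀ x ∈ LinearMap.ker p, ∀ y ∈ LinearMap.range p, (inner ℝ x y : ℝ) = 0)
    (hint : ∀ v, IsIntVec v → IsIntVec (p v)) :
    ∃ I : Set (Fin n),
      LinearMap.range p =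
        Submodule.span ℝ ((fun i => EuclideanSpace.single i (1 : ℝ)) '' I) := by
  have hp := LinearMap.isSymmetricProjection_of_isOrtho_ker_range hidem horth
  have hsingle : ∀ i, p (EuclideanSpace.single i 1) = 0 ∨
      p (EuclideanSpace.single i 1) = EuclideanSpace.single i 1 := fun i =>
    (hint _ (isIntVec_single i)).eq_zero_or_eq_single (hp.apply_single_self_eq_sum_sq i)
  let b := (EuclideanSpace.basisFun (Fin n) ℝ).toBasis
  have hb : ⇑b = fun i => EuclideanSpace.single i 1 := by
    ext1 i; simp [b]
  have hrange := b.range_eq_span_of_forall_apply_eq_zero_or_self (f := p)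
    (by simpa only [hb] using hsingle)
  exact ⟨_, by rwa [hb] at hrange⟩
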